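/- Every saturated set of DPL formulas is closed under deduction in H_DPL: if w is saturated and φ is derivable from w in H_DPL, then φ ∈ w. Consequently every saturated set is consistent. -/
import Mathlib


open MeasureTheory
open scoped ENNReal

/-- Formulas of dynamic probability logic. -/
inductive DPLF : Type
  | var : ℕ → DPLF
  | neg : DPLF → DPLF
  | conj : DPLF → DPLF → DPLF
  | prob : ℚ → DPLF → DPLF
  | next : DPLF → DPLF
deriving DecidableEq

namespace DPLF

def falsum : DPLF := (var 0).conj (var 0).neg
def impl (φ ψ : DPLF) : DPLF := (φ.conj ψ.neg).neg
def disj (φ ψ : DPLF) : DPLF := (φ.neg.conj ψ.neg).neg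
def iffF (φ ψ : DPLF) : DPLF := (φ.impl ψ).conj (ψ.impl φ)

/-- n-fold application of the next operator. -/
def nextn : ℕ → DPLF → DPLF
  | 0, φ => φ
  | n+1, φ => (nextn n φ).next

/-- Iterated probability operators `L_{r₁ … r_k}`. -/
def probs : List ℚ → DPLF → DPLF
  | [], φ => φ
  | r :: rs, φ => prob r (probs rs φ)

/-- Propositional tautology: true under every Boolean valuation respecting ¬ and ∧. -/
def IsTautology (φ : DPLF) : Prop :=
  ∀ v : DPLF → Bool, (∀ ψ, v ψ.neg = !v ψ) →
    (∀ ψ χ, v (ψ.conj χ) = (v ψ && v χ)) → v φ = true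

/-- Theoremhood in the Hilbert system `H⁻_DPL`. -/
inductive Hm : DPLF → Prop
  | taut {φ : DPLF} : IsTautology φ → Hm φ
  | fa1 : Hm (prob 0 falsum)
  | fa2 {φ : DPLF} {r s : ℚ} : 0 ≤ r → r ≤ 1 → 0 ≤ s → s ≤ 1 → 1 < r + s →
      Hm (impl (prob r φ.neg) (prob s φ).neg)
  | fa3 {φ ψ : DPLF} {r s : ℚ} : 0 ≤ r → 0 ≤ s → r + s ≤ 1 →
      Hm (impl ((prob r (φ.conj ψ)).conj (prob s (φ.conj ψ.neg))) (prob (r+s) φ))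
  | fa4 {φ ψ : DPLF} {r s : ℚ} : 0 ≤ r → 0 ≤ s → r + s ≤ 1 →
      Hm (impl ((prob r (φ.conj ψ)).neg.conj (prob s (φ.conj ψ.neg)).neg) (prob (r+s) φ).neg)
  | mono {φ ψ : DPLF} {r : ℚ} : 0 ≤ r → r ≤ 1 →
      Hm (impl (prob 1 (impl φ ψ)) (impl (prob r φ) (prob r ψ)))
  | func {φ : DPLF} : Hm (iffF φ.neg.next φ.next.neg)
  | conjNext {φ ψ : DPLF} : Hm (iffF (φ.conj ψ).next (φ.next.conj ψ.next))
  | mp {φ ψ : DPLF} : Hm (impl φ ψ) → Hm φ → Hm ψ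
  | arch {φ ψ : DPLF} {n : ℕ} {r : ℚ} : 0 ≤ r → r ≤ 1 →
      (∀ s : ℚ, 0 ≤ s → s < r → Hm (impl ψ (nextn n (prob s φ)))) →
      Hm (impl ψ (nextn n (prob r φ)))
  | necL {φ : DPLF} : Hm φ → Hm (prob 1 φ)
  | necNext {φ : DPLF} : Hm φ → Hm φ.next

/-- Theoremhood in the Hilbert system `H_DPL` (with the generalized Archimedean rule). -/
inductive Hg : DPLF → Prop
  | taut {φ : DPLF} : IsTautology φ → Hg φ
  | fa1 : Hg (prob 0 falsum)
  | fa2 {φ : DPLF} {r s : ℚ} : 0 ≤ r → r ≤ 1 → 0 ≤ s → s ≤ 1 → 1 < r + s →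
      Hg (impl (prob r φ.neg) (prob s φ).neg)
  | fa3 {φ ψ : DPLF} {r s : ℚ} : 0 ≤ r → 0 ≤ s → r + s ≤ 1 →
      Hg (impl ((prob r (φ.conj ψ)).conj (prob s (φ.conj ψ.neg))) (prob (r+s) φ))
  | fa4 {φ ψ : DPLF} {r s : ℚ} : 0 ≤ r → 0 ≤ s → r + s ≤ 1 →
      Hg (impl ((prob r (φ.conj ψ)).neg.conj (prob s (φ.conj ψ.neg)).neg) (prob (r+s) φ).neg)
  | mono {φ ψ : DPLF} {r : ℚ} : 0 ≤ r → r ≤ 1 →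
      Hg (impl (prob 1 (impl φ ψ)) (impl (prob r φ) (prob r ψ)))
  | func {φ : DPLF} : Hg (iffF φ.neg.next φ.next.neg)
  | conjNext {φ ψ : DPLF} : Hg (iffF (φ.conj ψ).next (φ.next.conj ψ.next))
  | mp {φ ψ : DPLF} : Hg (impl φ ψ) → Hg φ → Hg ψ
  | garch {φ ψ : DPLF} {n : ℕ} {rs : List ℚ} {r : ℚ} : 0 ≤ r → r ≤ 1 →
      (∀ q ∈ rs, 0 ≤ q ∧ q ≤ 1) →
      (∀ s : ℚ, 0 ≤ s → s < r → Hg (impl ψ (nextn n (probs rs (prob s φ))))) →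
      Hg (impl ψ (nextn n (probs rs (prob r φ))))
  | necL {φ : DPLF} : Hg φ → Hg (prob 1 φ)
  | necNext {φ : DPLF} : Hg φ → Hg φ.next

/-- Derivability from assumptions in `H⁻_DPL` (no necessitation on assumptions). -/
inductive HmFrom (Γ : Set DPLF) : DPLF → Prop
  | assum {φ : DPLF} : φ ∈ Γ → HmFrom Γ φ
  | thm {φ : DPLF} : Hm φ → HmFrom Γ φ
  | mp {φ ψ : DPLF} : HmFrom Γ (impl φ ψ) → HmFrom Γ φ → HmFrom Γ ψ
  | arch {φ ψ : DPLF} {n : ℕ} {r : ℚ} : 0 ≤ r → r ≤ 1 →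
      (∀ s : ℚ, 0 ≤ s → s < r → HmFrom Γ (impl ψ (nextn n (prob s φ)))) →
      HmFrom Γ (impl ψ (nextn n (prob r φ)))

/-- Derivability from assumptions in `H_DPL` (no necessitation on assumptions). -/
inductive HgFrom (Γ : Set DPLF) : DPLF → Prop
  | assum {φ : DPLF} : φ ∈ Γ → HgFrom Γ φ
  | thm {φ : DPLF} : Hg φ → HgFrom Γ φ
  | mp {φ ψ : DPLF} : HgFrom Γ (impl φ ψ) → HgFrom Γ φ → HgFrom Γ ψ
  | garch {φ ψ : DPLF} {n : ℕ} {rs : List ℚ} {r : ℚ} : 0 ≤ r → r ≤ 1 →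
      (∀ q ∈ rs, 0 ≤ q ∧ q ≤ 1) →
      (∀ s : ℚ, 0 ≤ s → s < r → HgFrom Γ (impl ψ (nextn n (probs rs (prob s φ))))) →
      HgFrom Γ (impl ψ (nextn n (probs rs (prob r φ))))

/-- Consistency of a set of formulas in `H_DPL`. -/
def GConsistent (Γ : Set DPLF) : Prop := ¬ HgFrom Γ falsum

/-- Consistency of a set of formulas in `H⁻_DPL`. -/
def MConsistent (Γ : Set DPLF) : Prop := ¬ HmFrom Γ falsum

/-- Saturated sets of formulas. -/
structure Saturated (w : Set DPLF) : Prop where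
  fincon : ∀ Γ : Set DPLF, Γ ⊆ w → Γ.Finite → GConsistent Γ
  negcomplete : ∀ φ : DPLF, φ ∈ w ∨ φ.neg ∈ w
  archProp : ∀ (φ : DPLF) (n : ℕ) (rs : List ℚ) (r : ℚ), 0 ≤ r → r ≤ 1 →
    (∀ q ∈ rs, 0 ≤ q ∧ q ≤ 1) →
    (∀ s : ℚ, 0 ≤ s → s < r → nextn n (probs rs (prob s φ)) ∈ w) →
    nextn n (probs rs (prob r φ)) ∈ w

/-- The canonical space: all saturated sets. -/
def Omegac : Type := {w : Set DPLF // Saturated w}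

/-- The basic set `[φ]` of saturated sets containing `φ`. -/
def box (φ : DPLF) : Set Omegac := {w | φ ∈ w.1}

/-- The canonical base `B_c`. -/
def Bc : Set (Set Omegac) := {A | ∃ φ : DPLF, A = box φ}

/-- Dynamic Markov model. -/
structure DMM where
  World : Type
  σ : MeasurableSpace World
  T : World → @Measure World σ
  T_prob : ∀ w, IsProbabilityMeasure (T w)
  T_meas : ∀ A : Set World, MeasurableSet[σ] A →
    @Measurable World ℝ≥0∞ σ _ (fun w => T w A)
  f : World → World
  f_meas : @Measurable World World σ σ f
  v : ℕ → Set World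
  v_meas : ∀ p : ℕ, MeasurableSet[σ] (v p)

/-- Satisfaction in a dynamic Markov model. -/
def Sat (M : DMM) : DPLF → M.World → Prop
  | var p, w => w ∈ M.v p
  | neg φ, w => ¬ Sat M φ w
  | conj φ ψ, w => Sat M φ w ∧ Sat M ψ w
  | prob r φ, w => ENNReal.ofReal (r : ℝ) ≤ M.T w {u | Sat M φ u}
  | next φ, w => Sat M φ (M.f w)

end DPLF

namespace DPLF

theorem hgFrom_mono {Γ Δ : Set DPLF} (h : Γ ⊆ Δ) {φ : DPLF} (hd : HgFrom Γ φ) :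
    HgFrom Δ φ := by
  induction hd with
  | assum hm => exact .assum (h hm)
  | thm ht => exact .thm ht
  | mp _ _ ih1 ih2 => exact .mp ih1 ih2
  | garch h0 h1 hrs _ ih => exact .garch h0 h1 hrs ih

theorem taut_weaken (χ ψ : DPLF) : IsTautology (impl χ (impl ψ χ)) := by
  intro v hneg hconj
  simp only [impl, hneg, hconj]
  cases v χ <;> cases v ψ <;> rfl

theorem taut_exfalso (ψ χ : DPLF) : IsTautology (impl ψ.neg (impl ψ χ)) := by
  intro v hneg hconj
  simp only [impl, hneg, hconj]
  cases v χ <;> cases v ψ <;> rfl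

theorem taut_contra (ψ : DPLF) : IsTautology (impl ψ (impl ψ.neg falsum)) := by
  intro v hneg hconj
  simp only [impl, falsum, hneg, hconj]
  cases v ψ <;> cases v (var 0) <;> rfl

/-- Helper: anything derivable from a finite subset of a saturated set is in it. -/
theorem mem_of_finite_deriv {w : Set DPLF} (hw : Saturated w)
    {Γ : Set DPLF} (hΓw : Γ ⊆ w) (hΓf : Γ.Finite) {ψ : DPLF}
    (hd : HgFrom Γ ψ) : ψ ∈ w := by
  rcases hw.negcomplete ψ with h | h
  · exact h
  · exfalso
    apply hw.fincon (insert ψ.neg Γ) (Set.insert_subset h hΓw) (hΓf.insert _)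
    have h1 : HgFrom (insert ψ.neg Γ) ψ :=
      hgFrom_mono (Set.subset_insert _ _) hd
    have h2 : HgFrom (insert ψ.neg Γ) ψ.neg := .assum (Set.mem_insert _ _)
    exact .mp (.mp (.thm (Hg.taut (taut_contra ψ))) h1) h2

end DPLF

open DPLF in
/-- saturated sets are closed under deduction in H_DPL and hence consistent. -/
theorem stmt6 (w : Set DPLF) (hw : Saturated w) :
    (∀ φ : DPLF, HgFrom w φ → φ ∈ w) ∧ GConsistent w := by
  have closed : ∀ φ : DPLF, HgFrom w φ → φ ∈ w := by
    intro φ hd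
    induction hd with
    | assum hm => exact hm
    | @thm φ ht =>
        exact mem_of_finite_deriv hw (Set.empty_subset w) Set.finite_empty (.thm ht)
    | @mp φ ψ _ _ ih1 ih2 =>
        refine mem_of_finite_deriv hw (Γ := {impl φ ψ, φ}) ?_ ?_ ?_
        · intro x hx
          rcases hx with h | h
          · exact h ▸ ih1
          · exact h ▸ ih2
        · exact (Set.finite_singleton φ).insert _
        · exact .mp (.assum (Set.mem_insert _ _))
            (.assum (Set.mem_insert_of_mem _ rfl))
    | @garch φ ψ n rs r h0 h1 hrs _ ih =>
        rcases hw.negcomplete ψ with hψ | hψ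
        · have hmem : nextn n (probs rs (prob r φ)) ∈ w := by
            apply hw.archProp φ n rs r h0 h1 hrs
            intro s hs0 hsr
            refine mem_of_finite_deriv hw
              (Γ := {impl ψ (nextn n (probs rs (prob s φ))), ψ}) ?_ ?_ ?_
            · intro x hx
              rcases hx with h | h
              · exact h ▸ ih s hs0 hsr
              · exact h ▸ hψ
            · exact (Set.finite_singleton ψ).insert _
            · exact .mp (.assum (Set.mem_insert _ _))
                (.assum (Set.mem_insert_of_mem _ rfl))
          refine mem_of_finite_deriv hw (Γ := {nextn n (probs rs (prob r φ))})
            (by simpa using hmem) (Set.finite_singleton _) ?_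
          exact .mp (.thm (Hg.taut (taut_weaken _ ψ))) (.assum rfl)
        · refine mem_of_finite_deriv hw (Γ := {ψ.neg})
            (by simpa using hψ) (Set.finite_singleton _) ?_
          exact .mp (.thm (Hg.taut (taut_exfalso ψ _))) (.assum rfl)
  refine ⟨closed, ?_⟩
  intro hcon
  have hf : falsum ∈ w := closed _ hcon
  exact hw.fincon {falsum} (by simpa using hf) (Set.finite_singleton _)
    (.assum rfl)
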